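/- arXiv:2402.04151 — 2 statements merged into one kernel-verified Lean document; each statement's English description precedes it below -/
import Mathlib

section
/- Let c > 0 and let P(·; x) be a probability density on ℝ^{2d} for each x ∈ ℝ^d. Suppose u₀, u₁ ∈ C(ℝ^d) are strictly positive, log u₀ is L-Lipschitz, and u₁(x) = c ∫∫_{ℝ^{2d}} P(x₁, x₂; x) u₀(x₁) u₀(x₂) dx₁ dx₂ for all x ∈ ℝ^d. Then for all x, x̃ ∈ ℝ^d: |log u₁(x) − log u₁(x̃)| ≤ L · W_{∞,1}(P(·; x), P(·; x̃)). -/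
open MeasureTheory ENNReal Filter
open scoped RealInnerProductSpace NNReal

noncomputable section

/-- `ℝ^d` with the Euclidean structure. -/
abbrev Euc (d : ℕ) := EuclideanSpace ℝ (Fin d)

/-- `π` is a coupling of `μ` and `ν`. -/
def IsCoupling {α β : Type*} [MeasurableSpace α] [MeasurableSpace β]
    (π : Measure (α × β)) (μ : Measure α) (ν : Measure β) : Prop :=
  π.map Prod.fst = μ ∧ π.map Prod.snd = ν

/-- The `L^∞`-optimal transport cost for a general cost function `c`. -/
noncomputable def WinfCost {α : Type*} [MeasurableSpace α]
    (c : α × α → ℝ≥0∞) (μ ν : Measure α) : ℝ≥0∞ :=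
  ⨅ (π : Measure (α × α)) (_ : IsCoupling π μ ν), essSup c π

/-- The `L^∞`-Wasserstein distance. -/
noncomputable def Winf {α : Type*} [MeasurableSpace α] [PseudoEMetricSpace α]
    (μ ν : Measure α) : ℝ≥0∞ :=
  WinfCost (fun p => edist p.1 p.2) μ ν

/-- The measure with density `f` with respect to the reference (Lebesgue) measure. -/
noncomputable def densityMeasure {α : Type*} [MeasureSpace α] (f : α → ℝ) : Measure α :=
  volume.withDensity (fun x => ENNReal.ofReal (f x))

/-- `f` is a probability density. -/
def IsProbDensity {α : Type*} [MeasureSpace α] (f : α → ℝ) : Prop :=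
  Measurable f ∧ (∀ x, 0 ≤ f x) ∧ (∫ x, f x) = 1

/-- `μ` is log-concave relative to the quadratic form `Q`, i.e. `μ = e^{-U}` where
`U : V → ℝ ∪ {+∞}` satisfies `U(tx+(1-t)y) ≤ tU(x)+(1-t)U(y) - t(1-t)/2 · Q(x-y)`;
equivalently `x ↦ U(x) - Q(x)/2` is convex.  (For `Q z = κ‖z‖²` this is
`κ`-log-concavity.) -/
def QLogConcave {V : Type*} [AddCommGroup V] [Module ℝ V] (Q : V → ℝ) (μ : V → ℝ) : Prop :=
  ∀ x y : V, ∀ t : ℝ, 0 ≤ t → t ≤ 1 →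
    μ x ^ t * μ y ^ (1 - t) * Real.exp (t * (1 - t) / 2 * Q (x - y))
      ≤ μ (t • x + (1 - t) • y)

/-- The `ℓ¹`-product cost `|(x₁,x₂) - (y₁,y₂)|₁ = |x₁ - y₁| + |x₂ - y₂|` on
`ℝ^{2d} = ℝ^d × ℝ^d` (as extended distance). -/
noncomputable def l1ProdCost {d : ℕ} (p : (Euc d × Euc d) × (Euc d × Euc d)) : ℝ≥0∞ :=
  ENNReal.ofReal (‖p.1.1 - p.2.1‖ + ‖p.1.2 - p.2.2‖)

lemma key {d : ℕ} (c : ℝ) (hc : 0 < c)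
    (P : Euc d → Euc d × Euc d → ℝ)
    (hP : ∀ x : Euc d, IsProbDensity (P x))
    (u₀ u₁ : Euc d → ℝ)
    (hu₀c : Continuous u₀)
    (hu₁pos : ∀ x, 0 < u₁ x)
    (heq : ∀ x : Euc d, u₁ x = c * ∫ p : Euc d × Euc d, P x p * u₀ p.1 * u₀ p.2)
    (x x' : Euc d) (π : Measure ((Euc d × Euc d) × (Euc d × Euc d)))
    (hπ : IsCoupling π (densityMeasure (P x)) (densityMeasure (P x')))
    (K : ℝ)
    (h1 : ∀ᵐ q ∂π, u₀ q.1.1 * u₀ q.1.2 ≤ Real.exp K * (u₀ q.2.1 * u₀ q.2.2))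
    (h2 : ∀ᵐ q ∂π, u₀ q.2.1 * u₀ q.2.2 ≤ Real.exp K * (u₀ q.1.1 * u₀ q.1.2)) :
    |Real.log (u₁ x) - Real.log (u₁ x')| ≤ K := by
  set g : Euc d × Euc d → ℝ := fun p => u₀ p.1 * u₀ p.2 with hg
  have hgc : Continuous g := (hu₀c.comp continuous_fst).mul (hu₀c.comp continuous_snd)
  have hfun : ∀ y : Euc d, (fun p : Euc d × Euc d => P y p * u₀ p.1 * u₀ p.2)
      = fun p => P y p * g p := by
    intro y; funext p; simp only [hg]; ring
  have heq' : ∀ y : Euc d, u₁ y = c * ∫ p : Euc d × Euc d, P y p * g p := by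
    intro y; rw [heq y, hfun y]
  have hintvol : ∀ y : Euc d, Integrable (fun p => P y p * g p) volume := by
    intro y
    by_contra hni
    have h0 : (∫ p : Euc d × Euc d, P y p * g p) = 0 := integral_undef hni
    have := heq' y
    rw [h0, mul_zero] at this
    exact (hu₁pos y).ne' this
  have hμint : ∀ y : Euc d, Integrable g (densityMeasure (P y)) := by
    intro y
    rw [densityMeasure, integrable_withDensity_iff (hP y).1.ennreal_ofReal
      (Eventually.of_forall fun p => ENNReal.ofReal_lt_top)]
    have : (fun p => g p * (ENNReal.ofReal (P y p)).toReal) = fun p => P y p * g p := by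
      funext p; rw [ENNReal.toReal_ofReal ((hP y).2.1 p)]; ring
    rw [this]; exact hintvol y
  have hμeq : ∀ y : Euc d, ∫ p, g p ∂(densityMeasure (P y)) = ∫ p, P y p * g p := by
    intro y
    rw [show densityMeasure (P y)
        = volume.withDensity (fun p => ((P y p).toNNReal : ℝ≥0∞)) from rfl,
      integral_withDensity_eq_integral_smul (hP y).1.real_toNNReal]
    congr 1; funext p
    rw [NNReal.smul_def, smul_eq_mul, Real.coe_toNNReal _ ((hP y).2.1 p)]
  have hfstm : AEMeasurable (Prod.fst : (Euc d × Euc d) × (Euc d × Euc d) → Euc d × Euc d) π :=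
    measurable_fst.aemeasurable
  have hsndm : AEMeasurable (Prod.snd : (Euc d × Euc d) × (Euc d × Euc d) → Euc d × Euc d) π :=
    measurable_snd.aemeasurable
  have hπ1 : ∫ q, g q.1 ∂π = ∫ p, g p ∂(densityMeasure (P x)) := by
    rw [← hπ.1, integral_map hfstm hgc.aestronglyMeasurable]
  have hπ2 : ∫ q, g q.2 ∂π = ∫ p, g p ∂(densityMeasure (P x')) := by
    rw [← hπ.2, integral_map hsndm hgc.aestronglyMeasurable]
  have hπint1 : Integrable (fun q => g q.1) π := by
    have h := hμint x; rw [← hπ.1] at h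
    exact h.comp_aemeasurable hfstm
  have hπint2 : Integrable (fun q => g q.2) π := by
    have h := hμint x'; rw [← hπ.2] at h
    exact h.comp_aemeasurable hsndm
  have hu1x : u₁ x = c * ∫ q, g q.1 ∂π := by rw [heq' x, hπ1, hμeq x]
  have hu1x' : u₁ x' = c * ∫ q, g q.2 ∂π := by rw [heq' x', hπ2, hμeq x']
  have key1 : u₁ x ≤ Real.exp K * u₁ x' := by
    have mono : ∫ q, g q.1 ∂π ≤ ∫ q, Real.exp K * g q.2 ∂π :=
      integral_mono_ae hπint1 (hπint2.const_mul _) h1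
    rw [integral_const_mul] at mono
    rw [hu1x, hu1x']
    calc c * ∫ q, g q.1 ∂π ≤ c * (Real.exp K * ∫ q, g q.2 ∂π) :=
          mul_le_mul_of_nonneg_left mono hc.le
    _ = Real.exp K * (c * ∫ q, g q.2 ∂π) := by ring
  have key2 : u₁ x' ≤ Real.exp K * u₁ x := by
    have mono : ∫ q, g q.2 ∂π ≤ ∫ q, Real.exp K * g q.1 ∂π :=
      integral_mono_ae hπint2 (hπint1.const_mul _) h2
    rw [integral_const_mul] at mono
    rw [hu1x, hu1x']
    calc c * ∫ q, g q.2 ∂π ≤ c * (Real.exp K * ∫ q, g q.1 ∂π) :=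
          mul_le_mul_of_nonneg_left mono hc.le
    _ = Real.exp K * (c * ∫ q, g q.1 ∂π) := by ring
  have l1 : Real.log (u₁ x) ≤ K + Real.log (u₁ x') := by
    calc Real.log (u₁ x) ≤ Real.log (Real.exp K * u₁ x') :=
          Real.log_le_log (hu₁pos x) key1
    _ = K + Real.log (u₁ x') := by
          rw [Real.log_mul (Real.exp_ne_zero K) (hu₁pos x').ne', Real.log_exp]
  have l2 : Real.log (u₁ x') ≤ K + Real.log (u₁ x) := by
    calc Real.log (u₁ x') ≤ Real.log (Real.exp K * u₁ x) :=
          Real.log_le_log (hu₁pos x') key2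
    _ = K + Real.log (u₁ x) := by
          rw [Real.log_mul (Real.exp_ne_zero K) (hu₁pos x).ne', Real.log_exp]
  rw [abs_sub_le_iff]
  exact ⟨by linarith, by linarith⟩

/-- If `u₁(x) = c ∫∫ P(x₁,x₂;x) u₀(x₁) u₀(x₂) dx₁ dx₂` with `u₀, u₁`
positive continuous, `log u₀` `L`-Lipschitz and each `P(·;x)` a probability density, then
`|log u₁(x) - log u₁(x̃)| ≤ L · W_{∞,1}(P(·;x), P(·;x̃))`. -/
theorem log_ratio_le_winf1 {d : ℕ} (c : ℝ) (hc : 0 < c)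
    (P : Euc d → Euc d × Euc d → ℝ)
    (hP : ∀ x : Euc d, IsProbDensity (P x))
    (u₀ u₁ : Euc d → ℝ) (L : ℝ≥0)
    (hu₀c : Continuous u₀) (hu₁c : Continuous u₁)
    (hu₀pos : ∀ x, 0 < u₀ x) (hu₁pos : ∀ x, 0 < u₁ x)
    (hlip : LipschitzWith L (fun x => Real.log (u₀ x)))
    (heq : ∀ x : Euc d, u₁ x = c * ∫ p : Euc d × Euc d, P x p * u₀ p.1 * u₀ p.2) :
    ∀ x x' : Euc d,
      ENNReal.ofReal |Real.log (u₁ x) - Real.log (u₁ x')|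
        ≤ (L : ℝ≥0∞) * WinfCost l1ProdCost (densityMeasure (P x)) (densityMeasure (P x')) := by
  intro x x'
  rcases eq_or_ne L 0 with hL | hL
  · -- `u₀` is constant, hence `u₁` is constant and the LHS is zero.
    have hconst : ∀ a : Euc d, u₀ a = u₀ 0 := by
      intro a
      have h := hlip.dist_le_mul a 0
      rw [hL] at h
      simp only [NNReal.coe_zero, zero_mul] at h
      have hd : Real.log (u₀ a) = Real.log (u₀ 0) := by
        have := dist_nonneg (x := Real.log (u₀ a)) (y := Real.log (u₀ 0))
        have : dist (Real.log (u₀ a)) (Real.log (u₀ 0)) = 0 := le_antisymm h this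
        exact dist_eq_zero.mp this
      calc u₀ a = Real.exp (Real.log (u₀ a)) := (Real.exp_log (hu₀pos a)).symm
      _ = Real.exp (Real.log (u₀ 0)) := by rw [hd]
      _ = u₀ 0 := Real.exp_log (hu₀pos 0)
    have hu1 : ∀ y : Euc d, u₁ y = c * (u₀ 0 * u₀ 0) := by
      intro y
      rw [heq y]
      congr 1
      have hf : (fun p : Euc d × Euc d => P y p * u₀ p.1 * u₀ p.2)
          = fun p => P y p * (u₀ 0 * u₀ 0) := by
        funext p; rw [hconst p.1, hconst p.2]; ring
      rw [hf, integral_mul_const, (hP y).2.2, one_mul]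
    rw [hu1 x, hu1 x']
    simp
  · -- `L ≠ 0`: bound against each coupling.
    have hL' : (L : ℝ≥0∞) ≠ 0 := by exact_mod_cast hL
    have hLt : (L : ℝ≥0∞) ≠ ∞ := ENNReal.coe_ne_top
    have hb : ∀ π : Measure ((Euc d × Euc d) × (Euc d × Euc d)),
        IsCoupling π (densityMeasure (P x)) (densityMeasure (P x')) →
        ENNReal.ofReal |Real.log (u₁ x) - Real.log (u₁ x')|
          ≤ (L : ℝ≥0∞) * essSup l1ProdCost π := by
      intro π hπ
      rcases eq_or_ne (essSup l1ProdCost π) ∞ with hM | hM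
      · rw [hM, ENNReal.mul_top hL']; exact le_top
      · set M := (essSup l1ProdCost π).toReal with hMdef
        have hMae : ∀ᵐ q ∂π, ‖q.1.1 - q.2.1‖ + ‖q.1.2 - q.2.2‖ ≤ M := by
          filter_upwards [ENNReal.ae_le_essSup (μ := π) l1ProdCost] with q hq
          rw [l1ProdCost] at hq
          exact (ENNReal.ofReal_le_iff_le_toReal hM).mp hq
        have hexp : ∀ a b : Euc d, u₀ a ≤ Real.exp ((L : ℝ) * ‖a - b‖) * u₀ b := by
          intro a b
          have h' : |Real.log (u₀ a) - Real.log (u₀ b)| ≤ (L : ℝ) * ‖a - b‖ := by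
            have h := hlip.dist_le_mul a b
            rwa [Real.dist_eq, dist_eq_norm] at h
          have hle : Real.log (u₀ a) ≤ (L : ℝ) * ‖a - b‖ + Real.log (u₀ b) := by
            have := (abs_le.mp h').2; linarith
          calc u₀ a = Real.exp (Real.log (u₀ a)) := (Real.exp_log (hu₀pos a)).symm
          _ ≤ Real.exp ((L : ℝ) * ‖a - b‖ + Real.log (u₀ b)) := Real.exp_le_exp.mpr hle
          _ = Real.exp ((L : ℝ) * ‖a - b‖) * u₀ b := by
              rw [Real.exp_add, Real.exp_log (hu₀pos b)]
        have hstep : ∀ (a₁ a₂ b₁ b₂ : Euc d), ‖a₁ - b₁‖ + ‖a₂ - b₂‖ ≤ M →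
            u₀ a₁ * u₀ a₂ ≤ Real.exp ((L : ℝ) * M) * (u₀ b₁ * u₀ b₂) := by
          intro a₁ a₂ b₁ b₂ hm
          have e1 := hexp a₁ b₁
          have e2 := hexp a₂ b₂
          have hmm : Real.exp ((L : ℝ) * ‖a₁ - b₁‖) * Real.exp ((L : ℝ) * ‖a₂ - b₂‖)
              ≤ Real.exp ((L : ℝ) * M) := by
            rw [← Real.exp_add, ← mul_add]
            exact Real.exp_le_exp.mpr (mul_le_mul_of_nonneg_left hm L.coe_nonneg)
          calc u₀ a₁ * u₀ a₂
              ≤ (Real.exp ((L : ℝ) * ‖a₁ - b₁‖) * u₀ b₁)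
                * (Real.exp ((L : ℝ) * ‖a₂ - b₂‖) * u₀ b₂) :=
                mul_le_mul e1 e2 (hu₀pos a₂).le (mul_nonneg (Real.exp_nonneg _) (hu₀pos b₁).le)
          _ = (Real.exp ((L : ℝ) * ‖a₁ - b₁‖) * Real.exp ((L : ℝ) * ‖a₂ - b₂‖))
                * (u₀ b₁ * u₀ b₂) := by ring
          _ ≤ Real.exp ((L : ℝ) * M) * (u₀ b₁ * u₀ b₂) :=
                mul_le_mul_of_nonneg_right hmm (mul_nonneg (hu₀pos b₁).le (hu₀pos b₂).le)
        have h1 : ∀ᵐ q ∂π,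
            u₀ q.1.1 * u₀ q.1.2 ≤ Real.exp ((L : ℝ) * M) * (u₀ q.2.1 * u₀ q.2.2) := by
          filter_upwards [hMae] with q hq
          exact hstep _ _ _ _ hq
        have h2 : ∀ᵐ q ∂π,
            u₀ q.2.1 * u₀ q.2.2 ≤ Real.exp ((L : ℝ) * M) * (u₀ q.1.1 * u₀ q.1.2) := by
          filter_upwards [hMae] with q hq
          refine hstep _ _ _ _ ?_
          rw [norm_sub_rev, norm_sub_rev q.2.2]
          exact hq
        have habs := key c hc P hP u₀ u₁ hu₀c hu₁pos heq x x' π hπ ((L : ℝ) * M) h1 h2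
        calc ENNReal.ofReal |Real.log (u₁ x) - Real.log (u₁ x')|
            ≤ ENNReal.ofReal ((L : ℝ) * M) := ENNReal.ofReal_le_ofReal habs
        _ = (L : ℝ≥0∞) * essSup l1ProdCost π := by
            rw [ENNReal.ofReal_mul L.coe_nonneg, ENNReal.ofReal_coe_nnreal,
              hMdef, ENNReal.ofReal_toReal hM]
    have hdiv : ENNReal.ofReal |Real.log (u₁ x) - Real.log (u₁ x')| / (L : ℝ≥0∞)
        ≤ WinfCost l1ProdCost (densityMeasure (P x)) (densityMeasure (P x')) := by
      refine le_iInf₂ fun π hπ => ?_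
      refine (ENNReal.div_le_iff_le_mul (Or.inl hL') (Or.inl hLt)).mpr ?_
      rw [mul_comm]
      exact hb π hπ
    have := (ENNReal.div_le_iff_le_mul (Or.inl hL') (Or.inl hLt)).mp hdiv
    rwa [mul_comm] at this


end
end

section
/- Let V, U : ℝ^d → ℝ ∪ {+∞} be strictly convex functions such that: (i) V is lower semicontinuous and α-convex for some α > 0; (ii) U is real-valued, C¹, admits a minimiser, and ∇U is β-Lipschitz for some β > 0. Let x = argmin V, y = argmin U, and z = argmin(V + U). Then (1/α)|z − y| ≥ max{ (1/β)|z − x|, (1/(α + β))|y − x| }. -/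
open MeasureTheory ENNReal Filter
open scoped RealInnerProductSpace NNReal

noncomputable section

/-! The comparison rests on `α ‖z - x‖ ≤ ‖∇U(z)‖ ≤ β ‖z - y‖`, the second inequality being the
Lipschitz bound since `∇U(y) = 0`. For the first, walk from `z` towards `x`: `α`-convexity of `V`
and minimality of `x` make `V` drop by at least `α t (1 - t) ‖x - z‖²` at `z + t (x - z)`, so
minimality of `z` for `V + U` forces `U` to rise by as much there; dividing by `t` and letting
`t → 0⁺` gives `α ‖x - z‖² ≤ ⟪∇U(z), x - z⟫`. The bound on `‖y - x‖` then follows by the triangle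
inequality. -/

open Set Topology

section Gradient
variable {E : Type*} [NormedAddCommGroup E] [InnerProductSpace ℝ E] [CompleteSpace E]

theorem HasGradientAt.eq_zero_of_forall_le {f : E → ℝ} {g y : E} (hf : HasGradientAt f g y)
    (hy : ∀ w, f y ≤ f w) : g = 0 := by
  have hmin : IsLocalMin f y := IsMinOn.isLocalMin (fun w _ => hy w) univ_mem
  simpa using hmin.hasFDerivAt_eq_zero hf.hasFDerivAt

theorem HasGradientAt.le_inner_of_forall_mul_le_sub {f : E → ℝ} {g z v : E} {a : ℝ}
    (hf : HasGradientAt f g z)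
    (h : ∀ t ∈ Ioo (0 : ℝ) 1, a * t * (1 - t) ≤ f (z + t • v) - f z) : a ≤ ⟪g, v⟫ := by
  have hslope : Tendsto (fun t : ℝ => t⁻¹ * (f (z + t • v) - f z)) (𝓝[>] 0) (𝓝 ⟪g, v⟫) := by
    simpa using (hf.hasFDerivAt.hasLineDerivAt v).tendsto_slope_zero_right
  have hlin : Tendsto (fun t : ℝ => a * (1 - t)) (𝓝[>] 0) (𝓝 a) := by
    have : Tendsto (fun t : ℝ => a * (1 - t)) (𝓝 0) (𝓝 (a * (1 - 0))) :=
      (continuous_const.mul (continuous_const.sub continuous_id)).tendsto 0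
    simpa using this.mono_left nhdsWithin_le_nhds
  refine le_of_tendsto_of_tendsto hlin hslope ?_
  filter_upwards [Ioo_mem_nhdsGT (zero_lt_one' ℝ)] with t ht
  rw [le_inv_mul_iff₀ ht.1]
  linarith [h t ht]

end Gradient

theorem EReal.ne_top_of_forall_add_coe_le {ι : Type*} {V : ι → EReal} {U : ι → ℝ} {z w : ι}
    (hz : ∀ v, V z + (U z : EReal) ≤ V v + (U v : EReal)) (hw : V w ≠ ⊤) : V z ≠ ⊤ := by
  intro htop
  have := hz w
  rw [htop, EReal.top_add_coe, top_le_iff] at this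
  exact EReal.add_ne_top hw (EReal.coe_ne_top _) this

/-- `α`-convexity of an extended-real-valued function, i.e. convexity of `V - α/2 ‖·‖²`. -/
def EStrongConvex {E : Type*} [NormedAddCommGroup E] [NormedSpace ℝ E] (α : ℝ) (V : E → EReal) :
    Prop :=
  ∀ a b : E, ∀ t : ℝ, 0 < t → t < 1 →
    V (t • a + (1 - t) • b)
      ≤ (t : EReal) * V a + ((1 - t : ℝ) : EReal) * V b
          - ((α * t * (1 - t) / 2 * ‖a - b‖ ^ 2 : ℝ) : EReal)

namespace EStrongConvex

section Normed
variable {E : Type*} [NormedAddCommGroup E] [NormedSpace ℝ E] {V : E → EReal} {α : ℝ}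
  {x z : E} {p q t : ℝ}

theorem le_coe_of_eq_coe (hV : EStrongConvex α V) (a b : E) (ht : t ∈ Ioo (0 : ℝ) 1)
    (ha : V a = p) (hb : V b = q) :
    V (t • a + (1 - t) • b)
      ≤ ((t * p + (1 - t) * q - α * t * (1 - t) / 2 * ‖a - b‖ ^ 2 : ℝ) : EReal) := by
  have := hV a b t ht.1 ht.2
  rw [ha, hb] at this
  exact_mod_cast this

theorem add_le_of_forall_le (hV : EStrongConvex α V) (hx : ∀ w, V x ≤ V w)
    (hVx : V x = p) (hVz : V z = q) (ht : t ∈ Ioo (0 : ℝ) 1) :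
    p + α * (1 - t) / 2 * ‖z - x‖ ^ 2 ≤ q := by
  have h : (p : EReal) ≤ _ := hVx ▸ (hx _).trans (hV.le_coe_of_eq_coe z x ht hVz hVx)
  have h' : t * p ≤ t * (q - α * (1 - t) / 2 * ‖z - x‖ ^ 2) := by
    have := EReal.coe_le_coe_iff.mp h
    linarith
  linarith [le_of_mul_le_mul_left h' ht.1]

theorem le_sub_of_forall_le (hV : EStrongConvex α V) (hx : ∀ w, V x ≤ V w)
    (hVx : V x = p) (hVz : V z = q) (ht : t ∈ Ioo (0 : ℝ) 1) :
    V (t • x + (1 - t) • z) ≤ ((q - α * t * (1 - t) * ‖x - z‖ ^ 2 : ℝ) : EReal) := by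
  refine (hV.le_coe_of_eq_coe x z ht hVx hVz).trans (EReal.coe_le_coe_iff.mpr ?_)
  have := hV.add_le_of_forall_le hx hVx hVz ht
  rw [norm_sub_rev] at this
  nlinarith [ht.1]

end Normed

variable {E : Type*} [NormedAddCommGroup E] [InnerProductSpace ℝ E] [CompleteSpace E]
  {V : E → EReal} {U : E → ℝ} {α : ℝ} {g x z : E}

theorem mul_sq_norm_le_inner (hV : EStrongConvex α V) (hVbot : ∀ w, V w ≠ ⊥) (hVz : V z ≠ ⊤)
    (hU : HasGradientAt U g z) (hx : ∀ w, V x ≤ V w)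
    (hz : ∀ w, V z + (U z : EReal) ≤ V w + (U w : EReal)) :
    α * ‖x - z‖ ^ 2 ≤ ⟪g, x - z⟫ := by
  have hVx : V x ≠ ⊤ := fun h => hVz (top_le_iff.mp (h ▸ hx z))
  obtain ⟨p, hp⟩ : ∃ p : ℝ, V x = p := ⟨_, (EReal.coe_toReal hVx (hVbot x)).symm⟩
  obtain ⟨q, hq⟩ : ∃ q : ℝ, V z = q := ⟨_, (EReal.coe_toReal hVz (hVbot z)).symm⟩
  refine hU.le_inner_of_forall_mul_le_sub fun t ht => ?_
  have hseg : z + t • (x - z) = t • x + (1 - t) • z := by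
    rw [smul_sub, sub_smul, one_smul]; abel
  have hmin := (hz (t • x + (1 - t) • z)).trans
    (add_le_add_left (hV.le_sub_of_forall_le hx hp hq ht) _)
  rw [hq] at hmin
  have := EReal.coe_le_coe_iff.mp (by exact_mod_cast hmin)
  rw [hseg]
  linarith

theorem mul_norm_le_norm_gradient (hV : EStrongConvex α V) (hVbot : ∀ w, V w ≠ ⊥)
    (hVz : V z ≠ ⊤) (hU : HasGradientAt U g z) (hx : ∀ w, V x ≤ V w)
    (hz : ∀ w, V z + (U z : EReal) ≤ V w + (U w : EReal)) :
    α * ‖x - z‖ ≤ ‖g‖ := by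
  rcases (norm_nonneg (x - z)).eq_or_lt with h0 | hpos
  · rw [← h0, mul_zero]; exact norm_nonneg g
  have h := (hV.mul_sq_norm_le_inner hVbot hVz hU hx hz).trans (real_inner_le_norm g (x - z))
  rw [sq, ← mul_assoc] at h
  exact le_of_mul_le_mul_right h hpos

end EStrongConvex

theorem minimiser_comparison_general {d : ℕ} (V : Euc d → EReal) (U : Euc d → ℝ) (α β : ℝ)
    (x y z : Euc d)
    (hα : 0 < α) (hβ : 0 < β)
    (hVbot : ∀ w, V w ≠ ⊥)
    (hVstrict : ∀ a b : Euc d, a ≠ b → ∀ t : ℝ, 0 < t → t < 1 →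
      V (t • a + (1 - t) • b) < (t : EReal) * V a + ((1 - t : ℝ) : EReal) * V b)
    (hVconv : ∀ a b : Euc d, ∀ t : ℝ, 0 < t → t < 1 →
      V (t • a + (1 - t) • b)
        ≤ (t : EReal) * V a + ((1 - t : ℝ) : EReal) * V b
            - ((α * t * (1 - t) / 2 * ‖a - b‖ ^ 2 : ℝ) : EReal))
    (hU : ContDiff ℝ 1 U)
    (hgrad : LipschitzWith (Real.toNNReal β) (fun w => gradient U w))
    (hx : ∀ w, V x ≤ V w)
    (hy : ∀ w, U y ≤ U w)
    (hz : ∀ w, V z + (U z : EReal) ≤ V w + (U w : EReal)) :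
    (1 / β) * ‖z - x‖ ≤ (1 / α) * ‖z - y‖ ∧
    (1 / (α + β)) * ‖y - x‖ ≤ (1 / α) * ‖z - y‖ := by
  have hgradU : ∀ w, HasGradientAt U (gradient U w) w :=
    fun w => ((hU.differentiable one_ne_zero) w).hasGradientAt
  have hgy : gradient U y = 0 := (hgradU y).eq_zero_of_forall_le hy
  have hgz : ‖gradient U z‖ ≤ β * ‖z - y‖ := by
    simpa [hgy, dist_eq_norm, Real.coe_toNNReal β hβ.le] using hgrad.dist_le_mul z y
  have key : α * ‖x - z‖ ≤ β * ‖z - y‖ := by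
    obtain rfl | hxz := eq_or_ne x z
    · rw [sub_self, norm_zero, mul_zero]
      positivity
    -- strict convexity rules out `V ≡ ⊤`
    have hVz : V z ≠ ⊤ := EReal.ne_top_of_forall_add_coe_le hz
      (hVstrict x z hxz (1 / 2) (by norm_num) (by norm_num)).ne_top
    exact (EStrongConvex.mul_norm_le_norm_gradient hVconv hVbot hVz (hgradU z) hx hz).trans hgz
  have htri : ‖y - x‖ ≤ ‖z - y‖ + ‖x - z‖ := by
    simpa [norm_sub_rev] using norm_sub_le_norm_sub_add_norm_sub y z x
  rw [norm_sub_rev x z] at key htri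
  constructor
  · rw [one_div_mul_eq_div, one_div_mul_eq_div, div_le_div_iff₀ hβ hα]
    linarith
  · rw [one_div_mul_eq_div, one_div_mul_eq_div, div_le_div_iff₀ (by positivity) hα]
    linarith [mul_le_mul_of_nonneg_left htri hα.le]

/-- Comparison of minimisers: if `V` is strictly convex, lsc and
`α`-convex (possibly `+∞`-valued), `U` is real-valued, strictly convex, `C¹` with
`β`-Lipschitz gradient, and `x, y, z` are the minimisers of `V`, `U`, `V + U`
respectively, then `(1/α)|z - y| ≥ max{(1/β)|z - x|, (1/(α+β))|y - x|}`. -/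
theorem minimiser_comparison {d : ℕ} (V : Euc d → EReal) (U : Euc d → ℝ) (α β : ℝ)
    (x y z : Euc d)
    (hα : 0 < α) (hβ : 0 < β)
    (hVbot : ∀ w, V w ≠ ⊥)
    (hVstrict : ∀ a b : Euc d, a ≠ b → ∀ t : ℝ, 0 < t → t < 1 →
      V (t • a + (1 - t) • b) < (t : EReal) * V a + ((1 - t : ℝ) : EReal) * V b)
    (hVlsc : LowerSemicontinuous V)
    (hVconv : ∀ a b : Euc d, ∀ t : ℝ, 0 < t → t < 1 →
      V (t • a + (1 - t) • b)
        ≤ (t : EReal) * V a + ((1 - t : ℝ) : EReal) * V b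
            - ((α * t * (1 - t) / 2 * ‖a - b‖ ^ 2 : ℝ) : EReal))
    (hUstrict : StrictConvexOn ℝ Set.univ U)
    (hU : ContDiff ℝ 1 U)
    (hgrad : LipschitzWith (Real.toNNReal β) (fun w => gradient U w))
    (hx : ∀ w, V x ≤ V w)
    (hy : ∀ w, U y ≤ U w)
    (hz : ∀ w, V z + (U z : EReal) ≤ V w + (U w : EReal)) :
    (1 / β) * ‖z - x‖ ≤ (1 / α) * ‖z - y‖ ∧
    (1 / (α + β)) * ‖y - x‖ ≤ (1 / α) * ‖z - y‖ :=
  minimiser_comparison_general V U α β x y z hα hβ hVbot hVstrict hVconv hU hgrad hx hy hz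

end
end
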